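/- Lumpable bisimilarity is a congruence for prefixing: if P₁ ≈_l P₂ then for every activity a = (α,r), a.P₁ ≈_l a.P₂. -/

import Mathlib

open scoped ENNReal Classical

/-- Action types: a countable set with a distinguished silent type `tau`. -/
inductive Act : Type where
  | tau : Act
  | vis : ℕ → Act
deriving DecidableEq

/-- PEPA components: prefix `(α,r).P`, choice `P+Q`, cooperation `P ⊲⊳_L Q`,
hiding `P/L`, and constants `A` (given by an environment of defining equations).
Rates live in `ℝ≥0∞` (positive reals together with the unspecified symbol `⊤`). -/
inductive Proc : Type where
  | pre : Act → ℝ≥0∞ → Proc → Proc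
  | choice : Proc → Proc → Proc
  | coop : Proc → Set Act → Proc → Proc
  | hide : Proc → Set Act → Proc
  | const : ℕ → Proc

namespace PEPA

/-- Fuelled conditional transition rate `qF E n P α P'`: the total rate
(with multiplicities) of the `α`-transitions from `P` to `P'` in the
multi-transition system given by the operational semantics of Table 1,
computed with `n` units of fuel for unfolding constants.
The shared-activity (cooperation) rule uses the apparent rates
`r_α(P) = ∑' X, qF E n P α X` as in
`R = (r₁/r_α(P)) · (r₂/r_α(Q)) · min(r_α(P), r_α(Q))`. -/
noncomputable def qF (E : ℕ → Proc) : ℕ → Proc → Act → Proc → ℝ≥0∞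
  | 0, _, _, _ => 0
  | n+1, .pre β r P, α, X => if β = α ∧ X = P then r else 0
  | n+1, .choice P Q, α, X => qF E n P α X + qF E n Q α X
  | n+1, .hide P L, α, X =>
      match X with
      | .hide P' L' =>
          if L' = L then
            if α = .tau then qF E n P .tau P' + ∑' β : L, qF E n P β P'
            else if α ∈ L then 0 else qF E n P α P'
          else 0
      | _ => 0
  | n+1, .coop P L Q, α, X =>
      match X with
      | .coop P' L' Q' =>
          if L' = L then
            if α ∈ L then
              (qF E n P α P' / ∑' Y, qF E n P α Y) * (qF E n Q α Q' / ∑' Y, qF E n Q α Y)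
                * min (∑' Y, qF E n P α Y) (∑' Y, qF E n Q α Y)
            else
              (if Q' = Q then qF E n P α P' else 0) + (if P' = P then qF E n Q α Q' else 0)
          else 0
      | _ => 0
  | n+1, .const c, α, X => qF E n (E c) α X

/-- `q E P α P'` : the (total) conditional transition rate from `P` to `P'`
via action type `α`, i.e. the sum of the rates over all transitions
`P --(α,r)--> P'` of the multi-transition system. -/
noncomputable def q (E : ℕ → Proc) (P : Proc) (α : Act) (P' : Proc) : ℝ≥0∞ :=
  ⨆ n, qF E n P α P'

/-- Total conditional transition rate `q[P,S,α] = Σ_{P'∈S} q(P,P',α)`. -/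
noncomputable def qTo (E : ℕ → Proc) (P : Proc) (S : Set Proc) (α : Act) : ℝ≥0∞ :=
  ∑' P' : S, q E P α P'

/-- One step of the derivation graph: `P` has some transition to `P'`. -/
def Step (E : ℕ → Proc) (P P' : Proc) : Prop := ∃ α, q E P α P' ≠ 0

/-- The derivative set `ds(P)`: the set of states reachable from `P`. -/
def ds (E : ℕ → Proc) (P : Proc) : Set Proc :=
  {P' | Relation.ReflTransGen (Step E) P P'}

/-- `𝒜(P)`: the set of current action types of `P`. -/
def curTypes (E : ℕ → Proc) (P : Proc) : Set Act :=
  {α | ∃ P', q E P α P' ≠ 0}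

/-- The set of equivalence classes `𝒞/ℛ` of a relation `ℛ`. -/
def eqCls (R : Proc → Proc → Prop) : Set (Set Proc) :=
  {S | ∃ P, S = {Q | R P Q}}

/-- A lumpable bisimulation: an equivalence relation `R` such that whenever
`R P Q`, then for all `α` and all classes `S` of `R` with either `α ≠ τ`, or
`α = τ` and `P,Q ∉ S`, it holds that `q[P,S,α] = q[Q,S,α]`. -/
def IsLumpBisim (E : ℕ → Proc) (R : Proc → Proc → Prop) : Prop :=
  Equivalence R ∧
    ∀ P Q, R P Q → ∀ α, ∀ S ∈ eqCls R,
      (α ≠ Act.tau ∨ (P ∉ S ∧ Q ∉ S)) → qTo E P S α = qTo E Q S α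

/-- Lumpable bisimilarity `≈_l`: the union of all lumpable bisimulations. -/
def lb (E : ℕ → Proc) (P Q : Proc) : Prop :=
  ∃ R, IsLumpBisim E R ∧ R P Q

section High

-- `Hs` is the set `ℋ` of high action types (the remaining visible types are low).
variable (E : ℕ → Proc) (Hs : Set Act)

/-- A high level component: every derivative may next engage in high types only. -/
def IsHighComp (Hc : Proc) : Prop := ∀ H' ∈ ds E Hc, curTypes E H' ⊆ Hs

/-- The set `ℒ` of low action types. -/
def Low : Set Act := {α | α ∉ Hs ∧ α ≠ Act.tau}

/-- An inert component: a high level component performing no activity at all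
(hence sharing no action type with any component). -/
def inert : Proc := .pre .tau 0 (.const 0)

/-- `P \ ℋ` : `P ⊲⊳_ℋ H̄` where `H̄` is a high level component that does not
cooperate with `P` (it shares no action types with the derivatives of `P`). -/
def restr (P : Proc) : Proc := .coop P Hs inert

/-- The high context `C[_] = (_ ⊲⊳_ℋ Hc)/ℋ` applied to `P`. -/
def hctx (Hc P : Proc) : Proc := .hide (.coop P Hs Hc) Hs

/-- Stochastic Non-Interference: `P\ℋ ≈_l (P ⊲⊳_ℋ H)/ℋ` for every high `H`. -/
def SNI (P : Proc) : Prop :=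
  ∀ Hc, IsHighComp E Hs Hc → lb E (restr Hs P) (hctx Hs Hc P)

/-- Persistent Stochastic Non-Interference: every derivative of `P` satisfies SNI. -/
def PSNI (P : Proc) : Prop := ∀ P' ∈ ds E P, SNI E Hs P'

/-- `q_C(P,P',α)`: the sum of the rates over all transitions
`C[P] --(α,r)--> C'[P']` (with `C'[_]` ranging over high contexts). -/
noncomputable def qC (Hc P : Proc) (α : Act) (P' : Proc) : ℝ≥0∞ :=
  ∑' Hc' : Proc, q E (hctx Hs Hc P) α (hctx Hs Hc' P')

/-- `q_C[P,S,α] = Σ_{P'∈S} q_C(P,P',α)`. -/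
noncomputable def qCTo (Hc P : Proc) (S : Set Proc) (α : Act) : ℝ≥0∞ :=
  ∑' P' : S, qC E Hs Hc P α P'

/-- A lumpable bisimulation on high contexts. -/
def IsLumpBisimHC (R : Proc → Proc → Prop) : Prop :=
  Equivalence R ∧
    ∀ P Q, R P Q → ∀ Hc, IsHighComp E Hs Hc → ∀ α, ∀ S ∈ eqCls R,
      (α ≠ Act.tau ∨ (P ∉ S ∧ Q ∉ S)) →
        qCTo E Hs Hc P S α = qCTo E Hs Hc Q S α

/-- Lumpable bisimilarity on high contexts `≈_l^hc`. -/
def lbhc (P Q : Proc) : Prop := ∃ R, IsLumpBisimHC E Hs R ∧ R P Q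

/-- A lumpable bisimulation up to `ℋ`. -/
def IsLumpBisimUpto (R : Proc → Proc → Prop) : Prop :=
  Equivalence R ∧
    ∀ P Q, R P Q → ∀ α, ∀ S ∈ eqCls R,
      ((α ∉ Hs ∧ α ≠ Act.tau) → qTo E P S α = qTo E Q S α) ∧
      ((α ∈ Hs ∨ α = Act.tau) → P ∉ S → Q ∉ S → qTo E P S α = qTo E Q S α)

/-- Lumpable bisimilarity up to `ℋ`, written `≈_l^ℋ`. -/
def lbUpto (P Q : Proc) : Prop := ∃ R, IsLumpBisimUpto E Hs R ∧ R P Q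

end High

end PEPA

open PEPA

/-!
Take a lumpable bisimulation `R` with `R P₁ P₂` and coarsen it by merging the `R`-classes of
`a.P₁` and `a.P₂`. Each class of the coarser relation is an old class or the merged one, and the
rate into the merged class is the sum of the rates into its (one or two) constituent `R`-classes,
so the conditions for the pairs of `R` carry over. The new pairs reduce to `(a.P₁, a.P₂)`, whose
only transitions go to `P₁` resp. `P₂` at rate `r`; since every new class is a union of
`R`-classes, it contains both of `P₁, P₂` or neither.
-/

namespace PEPA

theorem q_pre (E : ℕ → Proc) (β : Act) (r : ℝ≥0∞) (P : Proc) (α : Act) (X : Proc) :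
    q E (.pre β r P) α X = if β = α ∧ X = P then r else 0 := by
  refine le_antisymm (iSup_le fun n => ?_) (le_iSup_of_le 1 le_rfl)
  cases n <;> simp [qF]

theorem qTo_pre (E : ℕ → Proc) (β : Act) (r : ℝ≥0∞) (P : Proc) (S : Set Proc) (α : Act) :
    qTo E (.pre β r P) S α = if β = α ∧ P ∈ S then r else 0 := by
  by_cases hβ : β = α
  · simp only [qTo, q_pre, hβ, true_and, tsum_subtype S fun X => if X = P then r else 0]
    rw [tsum_eq_single P fun X hX => by simp [hX]]
    simp [Set.indicator_apply]
  · simp [qTo, q_pre, hβ]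

theorem qTo_union_of_disjoint (E : ℕ → Proc) (P : Proc) {S₁ S₂ : Set Proc} (α : Act)
    (hd : Disjoint S₁ S₂) : qTo E P (S₁ ∪ S₂) α = qTo E P S₁ α + qTo E P S₂ α :=
  ENNReal.summable.tsum_union_disjoint hd ENNReal.summable

section Merge

variable {σ : Type*} {R : σ → σ → Prop} {A B X Y : σ}

def mergedCls (R : σ → σ → Prop) (A B : σ) : Set σ := {X | R A X} ∪ {X | R B X}

def mergeRel (R : σ → σ → Prop) (A B X Y : σ) : Prop :=
  R X Y ∨ (X ∈ mergedCls R A B ∧ Y ∈ mergedCls R A B)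

theorem mergedCls_closed (hR : Equivalence R) (hX : X ∈ mergedCls R A B) (hXY : R X Y) :
    Y ∈ mergedCls R A B :=
  hX.imp (hR.trans · hXY) (hR.trans · hXY)

theorem mergedCls_eq_of_rel (hR : Equivalence R) (hAB : R A B) :
    mergedCls R A B = {X | R A X} :=
  Set.union_eq_left.2 fun _ hX => hR.trans hAB hX

theorem equivalence_mergeRel (hR : Equivalence R) : Equivalence (mergeRel R A B) where
  refl X := Or.inl (hR.refl X)
  symm := by
    rintro X Y (hXY | ⟨hX, hY⟩)
    exacts [Or.inl (hR.symm hXY), Or.inr ⟨hY, hX⟩]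
  trans := by
    rintro X Y Z (hXY | ⟨hX, hY⟩) (hYZ | ⟨hY', hZ⟩)
    · exact Or.inl (hR.trans hXY hYZ)
    · exact Or.inr ⟨mergedCls_closed hR hY' (hR.symm hXY), hZ⟩
    · exact Or.inr ⟨hX, mergedCls_closed hR hY hYZ⟩
    · exact Or.inr ⟨hX, hZ⟩

end Merge

section Lumping

variable {R : Proc → Proc → Prop} {A B X Y : Proc} {T : Set Proc}

theorem mem_of_mem_eqCls_mergeRel (hR : Equivalence R) (hT : T ∈ eqCls (mergeRel R A B))
    (hX : X ∈ T) (hXY : R X Y) : Y ∈ T := by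
  obtain ⟨P, rfl⟩ := hT
  exact (equivalence_mergeRel hR).trans hX (Or.inl hXY)

theorem mem_eqCls_mergeRel (hR : Equivalence R) (hT : T ∈ eqCls (mergeRel R A B)) :
    (T ∈ eqCls R ∧ Disjoint T (mergedCls R A B)) ∨ T = mergedCls R A B := by
  obtain ⟨P, rfl⟩ := hT
  by_cases hP : P ∈ mergedCls R A B
  · exact Or.inr <| Set.ext fun Q =>
      ⟨fun h => h.elim (mergedCls_closed hR hP) And.right, fun hQ => Or.inr ⟨hP, hQ⟩⟩
  · have hcls : {Q | mergeRel R A B P Q} = {Q | R P Q} :=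
      Set.ext fun _ => or_iff_left fun h => hP h.1
    rw [hcls]
    exact Or.inl ⟨⟨P, rfl⟩, Set.disjoint_left.2 fun Q hQ hQS =>
      hP (mergedCls_closed hR hQS (hR.symm hQ))⟩

variable {E : ℕ → Proc} {α : Act}

theorem IsLumpBisim.qTo_mergedCls_eq (hR : IsLumpBisim E R) (hXY : R X Y)
    (hα : α ≠ .tau ∨ (X ∉ mergedCls R A B ∧ Y ∉ mergedCls R A B)) :
    qTo E X (mergedCls R A B) α = qTo E Y (mergedCls R A B) α := by
  by_cases hAB : R A B
  · rw [mergedCls_eq_of_rel hR.1 hAB] at hα ⊢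
    exact hR.2 X Y hXY α _ ⟨A, rfl⟩ hα
  · have hd : Disjoint {X | R A X} {X | R B X} :=
      Set.disjoint_left.2 fun _ hA hB => hAB (hR.1.trans hA (hR.1.symm hB))
    simp only [mergedCls, Set.mem_union, not_or] at hα
    rw [mergedCls, qTo_union_of_disjoint E X α hd, qTo_union_of_disjoint E Y α hd]
    congr 1 <;> apply hR.2 X Y hXY α _ ⟨_, rfl⟩ <;> tauto

theorem IsLumpBisim.qTo_eq_of_mem_eqCls_mergeRel (hR : IsLumpBisim E R) (hXY : R X Y)
    (hT : T ∈ eqCls (mergeRel R A B)) (hα : α ≠ .tau ∨ (X ∉ T ∧ Y ∉ T)) :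
    qTo E X T α = qTo E Y T α := by
  rcases mem_eqCls_mergeRel hR.1 hT with ⟨hTR, -⟩ | rfl
  · exact hR.2 X Y hXY α T hTR hα
  · exact hR.qTo_mergedCls_eq hXY hα

theorem IsLumpBisim.qTo_eq_of_mem_mergedCls (hR : IsLumpBisim E R)
    (hAB : ∀ α, ∀ T ∈ eqCls (mergeRel R A B), qTo E A T α = qTo E B T α)
    (hX : X ∈ mergedCls R A B) (hT : T ∈ eqCls (mergeRel R A B))
    (hα : α ≠ .tau ∨ Disjoint T (mergedCls R A B)) :
    qTo E X T α = qTo E A T α := by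
  have hcond : ∀ C ∈ mergedCls R A B, α ≠ .tau ∨ (X ∉ T ∧ C ∉ T) := fun C hC =>
    hα.imp_right fun hd => ⟨Set.disjoint_right.1 hd hX, Set.disjoint_right.1 hd hC⟩
  rcases hX with hAX | hBX
  · exact hR.qTo_eq_of_mem_eqCls_mergeRel (hR.1.symm hAX) hT
      (hcond A (Or.inl (hR.1.refl A)))
  · rw [hAB α T hT]
    exact hR.qTo_eq_of_mem_eqCls_mergeRel (hR.1.symm hBX) hT
      (hcond B (Or.inr (hR.1.refl B)))

theorem IsLumpBisim.mergeRel (hR : IsLumpBisim E R)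
    (hAB : ∀ α, ∀ T ∈ eqCls (mergeRel R A B), qTo E A T α = qTo E B T α) :
    IsLumpBisim E (mergeRel R A B) := by
  refine ⟨equivalence_mergeRel hR.1, ?_⟩
  rintro X Y (hXY | ⟨hX, hY⟩) α T hT hα
  · exact hR.qTo_eq_of_mem_eqCls_mergeRel hXY hT hα
  · have hα' : α ≠ .tau ∨ Disjoint T (mergedCls R A B) := by
      rcases mem_eqCls_mergeRel hR.1 hT with ⟨-, hd⟩ | rfl
      · exact Or.inr hd
      · exact Or.inl (hα.resolve_right fun h => h.1 hX)
    rw [hR.qTo_eq_of_mem_mergedCls hAB hX hT hα', hR.qTo_eq_of_mem_mergedCls hAB hY hT hα']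

end Lumping

end PEPA

/-- Lumpable bisimilarity is a congruence for prefixing:
if `P₁ ≈_l P₂` then `a.P₁ ≈_l a.P₂` for every activity `a = (α,r)`. -/
theorem lb_congr_pre (E : ℕ → Proc) (P₁ P₂ : Proc) (h : lb E P₁ P₂) :
    ∀ (α : Act) (r : ℝ≥0∞), lb E (.pre α r P₁) (.pre α r P₂) := by
  intro α r
  obtain ⟨R, hR, h₁₂⟩ := h
  refine ⟨mergeRel R (.pre α r P₁) (.pre α r P₂), hR.mergeRel fun β T hT => ?_,
    Or.inr ⟨Or.inl (hR.1.refl _), Or.inr (hR.1.refl _)⟩⟩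
  have hP : P₁ ∈ T ↔ P₂ ∈ T :=
    ⟨(mem_of_mem_eqCls_mergeRel hR.1 hT · h₁₂),
      (mem_of_mem_eqCls_mergeRel hR.1 hT · (hR.1.symm h₁₂))⟩
  rw [qTo_pre, qTo_pre, hP]
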